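/- For n ≥ 2 and k ≥ 3, the quantity c(n,k) = C(n+k-1, k) - n² satisfies c(n,k) ≥ n, except exactly in the three cases (n,k) = (2,3), (2,4), (3,3). -/
import Mathlib

lemma choose_mono_diag (m : ℕ) : ∀ {j k : ℕ}, j ≤ k →
    Nat.choose (m + j) j ≤ Nat.choose (m + k) k := by
  intro j k h
  induction h with
  | refl => exact le_rfl
  | @step k h ih =>
      have he : Nat.choose (m + (k + 1)) (k + 1)
          = Nat.choose (m + k) k + Nat.choose (m + k) (k + 1) :=
        Nat.choose_succ_succ (m + k) k
      show Nat.choose (m + j) j ≤ Nat.choose (m + (k + 1)) (k + 1)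
      omega

lemma base3 : ∀ n, 4 ≤ n → n ^ 2 + n ≤ Nat.choose (n + 2) 3 := by
  intro n hn
  induction n, hn using Nat.le_induction with
  | base => decide
  | succ n hn ih =>
      have h2 : 2 * n + 2 ≤ Nat.choose (n + 2) 2 := by
        rw [Nat.choose_two_right]
        rw [Nat.le_div_iff_mul_le (by norm_num)]
        have : n + 2 - 1 = n + 1 := by omega
        rw [this]
        nlinarith
      have : Nat.choose (n + 1 + 2) 3 = Nat.choose (n + 2) 2 + Nat.choose (n + 2) 3 := by
        show Nat.choose (n + 2 + 1) (2 + 1) = _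
        rw [Nat.choose_succ_succ]
      rw [this]
      nlinarith

lemma key (n k : ℕ) (hn : 2 ≤ n) (hk : 3 ≤ k)
    (hex : ¬((n = 2 ∧ k = 3) ∨ (n = 2 ∧ k = 4) ∨ (n = 3 ∧ k = 3))) :
    n ^ 2 + n ≤ Nat.choose (n - 1 + k) k := by
  rcases Nat.lt_or_ge n 4 with h4 | h4
  · interval_cases n
    · -- n = 2
      have hk5 : 5 ≤ k := by omega
      have : Nat.choose (1 + k) k = k + 1 := by
        rw [Nat.add_comm]; exact Nat.choose_succ_self_right k
      simpa [this] using by omega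
    · -- n = 3
      have hk4 : 4 ≤ k := by omega
      have h1 : Nat.choose (2 + k) k = Nat.choose (2 + k) 2 := by
        have := Nat.choose_symm (show k ≤ 2 + k by omega)
        simpa using this.symm
      have h2 : Nat.choose 6 2 ≤ Nat.choose (2 + k) 2 :=
        Nat.choose_le_choose 2 (by omega)
      have h3 : (12 : ℕ) ≤ Nat.choose (2 + k) 2 := le_trans (by decide) h2
      rw [show (3:ℕ) - 1 + k = 2 + k from rfl, h1]
      omega
  · have h1 : Nat.choose (n - 1 + 3) 3 ≤ Nat.choose (n - 1 + k) k :=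
      choose_mono_diag (n - 1) hk
    have h2 : n - 1 + 3 = n + 2 := by omega
    rw [h2] at h1
    exact le_trans (base3 n h4) h1

/-- For `n ≥ 2`, `k ≥ 3`, the codimension `c(n,k) = C(n+k-1,k) - n²` satisfies
`c(n,k) ≥ n` exactly outside the three exceptional cases `(2,3), (2,4), (3,3)`. -/
theorem codim_ge_n_iff_not_exceptional (n k : ℕ) (hn : 2 ≤ n) (hk : 3 ≤ k) :
    ((n : ℤ) ≤ (Nat.choose (n + k - 1) k : ℤ) - (n : ℤ) ^ 2) ↔
      ¬((n = 2 ∧ k = 3) ∨ (n = 2 ∧ k = 4) ∨ (n = 3 ∧ k = 3)) := by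
  have hE : n + k - 1 = n - 1 + k := by omega
  rw [hE]
  constructor
  · intro h hex
    rcases hex with ⟨h1, h2⟩ | ⟨h1, h2⟩ | ⟨h1, h2⟩ <;> subst h1 <;> subst h2 <;>
      norm_num [Nat.choose] at h
  · intro hex
    have h := key n k hn hk hex
    have : ((n ^ 2 + n : ℕ) : ℤ) ≤ ((Nat.choose (n - 1 + k) k : ℕ) : ℤ) := by
      exact_mod_cast h
    push_cast at this
    linarith
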